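/- arXiv:2008.01720 — 3 statements merged into one kernel-verified Lean document; each statement's English description precedes it below -/
import Mathlib

section
/- (Theorem 3.1) Let X_1, …, X_n be i.i.d. with the NDOPPE PMF f. Then T = X_1 + ⋯ + X_n has PMF f_T(t) = h(θ)^n · A_n(t) · (1−θ)^t for t ∈ ℕ; equivalently, for every t ∈ ℕ, ∑_{(x_1,…,x_n) ∈ ℕ^n, x_1+⋯+x_n = t} ∏_{i=1}^n f(x_i) = h(θ)^n · A_n(t) · (1−θ)^t. -/
open scoped BigOperators

/-- `p x = ∑_{k=1}^r a_{k-1} (k-1)! C(x+k-1, x)` (index shifted: `k ∈ range r` stands for `k-1`). -/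
noncomputable def p (r : ℕ) (a : ℕ → ℝ) (x : ℕ) : ℝ :=
  ∑ k ∈ Finset.range r, a k * (Nat.factorial k : ℝ) * (Nat.choose (x + k) x : ℝ)

/-- `h θ = 1 / ∑_{k=1}^r a_{k-1} (k-1)! / θ^k` (index shifted). -/
noncomputable def h (r : ℕ) (a : ℕ → ℝ) (θ : ℝ) : ℝ :=
  1 / ∑ k ∈ Finset.range r, a k * (Nat.factorial k : ℝ) / θ ^ (k + 1)

/-- `A n t = ∑_{y₁+⋯+y_r = n} (n!/(y₁!⋯y_r!)) (∏_{k=1}^r (a_{k-1}(k-1)!)^{y_k})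
    C(t + ∑_{k=1}^r k y_k − 1, t)`. -/
noncomputable def A (r : ℕ) (a : ℕ → ℝ) (n t : ℕ) : ℝ :=
  ∑ y ∈ Finset.Nat.antidiagonalTuple r n,
    ((Nat.factorial n : ℝ) / ∏ k : Fin r, (Nat.factorial (y k) : ℝ)) *
      (∏ k : Fin r, (a (k : ℕ) * (Nat.factorial (k : ℕ) : ℝ)) ^ (y k)) *
      (Nat.choose (t + (∑ k : Fin r, ((k : ℕ) + 1) * y k) - 1) t : ℝ)

/-! The identity is one of generating functions. Since `∑ₓ C(x+k, x) zˣ = (1 - z)^{-(k+1)}`, the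
series of `p` is `P(z) = ∑ₖ aₖ k! (1 - z)^{-(k+1)}`, and after pulling out `h(θ)ⁿ (1-θ)ᵗ` the
left-hand side is the coefficient of `zᵗ` in `P(z)ⁿ`. The multinomial theorem expands `P(z)ⁿ` into
terms `(1 - z)^{-m}` with `m = ∑ₖ (k+1) yₖ`, whose `zᵗ`-coefficient is `C(t+m-1, t)`. -/

open PowerSeries

theorem sum_antidiagonalTuple_prod_eq_coeff_pow {R : Type*} [CommSemiring R] (f : ℕ → R)
    (n t : ℕ) :
    ∑ x ∈ Finset.Nat.antidiagonalTuple n t, ∏ i, f (x i) = coeff t (mk f ^ n) := by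
  rw [← Fin.prod_const, coeff_prod, ← Finset.piAntidiag_univ_fin_eq_antidiagonalTuple]
  refine (Finset.sum_equiv Finsupp.equivFunOnFinite (fun l => ?_) fun l _ => by simp).symm
  simp [Finset.mem_piAntidiag]

theorem Nat.cast_multinomial {α K : Type*} [Field K] [CharZero K] (s : Finset α) (f : α → ℕ) :
    (Nat.multinomial s f : K) = (∑ i ∈ s, f i).factorial / ∏ i ∈ s, ((f i).factorial : K) := by
  rw [eq_div_iff (Finset.prod_ne_zero_iff.mpr fun i _ => Nat.cast_ne_zero.mpr
    (Nat.factorial_ne_zero _)), mul_comm]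
  exact_mod_cast Nat.multinomial_spec s f

section GeneratingFunction

variable {R : Type*} [CommRing R]

-- For `m = 0` the truncated subtraction makes the right-hand side `C(t - 1, t) = [t = 0]`.
theorem coeff_mk_one_pow (m t : ℕ) : coeff t ((mk 1 : R⟦X⟧) ^ m) = (t + m - 1).choose t := by
  cases m with
  | zero => cases t <;> simp [coeff_one]
  | succ m =>
    have : (mk 1 : R⟦X⟧) ^ (m + 1) = invOneSubPow R (m + 1) := by
      rw [invOneSubPow_eq_inv_one_sub_pow, Units.val_pow_eq_pow_val]; rfl
    rw [this, invOneSubPow_val_succ_eq_mk_add_choose, coeff_mk, Nat.add_succ_sub_one,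
      add_comm t m, Nat.choose_symm_add]

theorem mk_sum_mul_choose {r : ℕ} (c : Fin r → R) :
    mk (fun x => ∑ k : Fin r, c k * (x + k).choose x) =
      ∑ k : Fin r, C (c k) * (mk 1 : R⟦X⟧) ^ (k + 1 : ℕ) := by
  ext t
  simp [map_sum, coeff_mk_one_pow]

theorem sum_antidiagonalTuple_prod_sum_mul_choose {r : ℕ} (c : Fin r → R) (n t : ℕ) :
    ∑ x ∈ Finset.Nat.antidiagonalTuple n t, ∏ i, ∑ k : Fin r, c k * (x i + k).choose (x i) =
      ∑ y ∈ Finset.Nat.antidiagonalTuple r n, Nat.multinomial Finset.univ y * (∏ k, c k ^ y k) *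
        (t + ∑ k : Fin r, (k + 1) * y k - 1).choose t := by
  rw [sum_antidiagonalTuple_prod_eq_coeff_pow (fun x => ∑ k : Fin r, c k * (x + k).choose x),
    mk_sum_mul_choose, Finset.sum_pow_eq_sum_piAntidiag,
    Finset.piAntidiag_univ_fin_eq_antidiagonalTuple, map_sum]
  refine Finset.sum_congr rfl fun y _ => ?_
  simp only [mul_pow, Finset.prod_mul_distrib, ← map_pow, ← map_prod, ← pow_mul,
    Finset.prod_pow_eq_pow_sum]
  rw [← map_natCast (C (R := R)), mul_assoc, coeff_C_mul, coeff_C_mul, coeff_mk_one_pow]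

end GeneratingFunction

theorem p_eq_sum_fin (r : ℕ) (a : ℕ → ℝ) (x : ℕ) :
    p r a x = ∑ k : Fin r, a k * (k : ℕ).factorial * (x + k).choose x :=
  (Fin.sum_univ_eq_sum_range (fun k => a k * k.factorial * (x + k).choose x) r).symm

theorem sum_antidiagonalTuple_prod_p (r : ℕ) (a : ℕ → ℝ) (n t : ℕ) :
    ∑ x ∈ Finset.Nat.antidiagonalTuple n t, ∏ i, p r a (x i) = A r a n t := by
  simp only [p_eq_sum_fin, sum_antidiagonalTuple_prod_sum_mul_choose, A]
  refine Finset.sum_congr rfl fun y hy => ?_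
  rw [Nat.cast_multinomial, Finset.Nat.mem_antidiagonalTuple.mp hy]

theorem ndoppe_sum_pmf_general (r : ℕ) (a : ℕ → ℝ) (θ : ℝ) (n : ℕ) (t : ℕ) :
    ∑ x ∈ Finset.Nat.antidiagonalTuple n t,
        ∏ i, h r a θ * p r a (x i) * (1 - θ) ^ (x i) =
      h r a θ ^ n * A r a n t * (1 - θ) ^ t := by
  have factor : ∀ x ∈ Finset.Nat.antidiagonalTuple n t,
      ∏ i, h r a θ * p r a (x i) * (1 - θ) ^ (x i) =
        h r a θ ^ n * (1 - θ) ^ t * ∏ i, p r a (x i) := by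
    intro x hx
    rw [Finset.prod_mul_distrib, Finset.prod_mul_distrib, Finset.prod_const,
      Finset.prod_pow_eq_pow_sum, Finset.Nat.mem_antidiagonalTuple.mp hx, Finset.card_univ,
      Fintype.card_fin]
    ring
  rw [Finset.sum_congr rfl factor, ← Finset.mul_sum, sum_antidiagonalTuple_prod_p]
  ring

/-- Theorem 3.1: If `X₁, …, X_n` are i.i.d. with the NDOPPE PMF `f`, then
`T = X₁ + ⋯ + X_n` has PMF `f_T(t) = h(θ)^n A_n(t) (1−θ)^t`; equivalently, for every `t`,
`∑_{x₁+⋯+x_n = t} ∏_{i=1}^n f(x_i) = h(θ)^n A_n(t) (1−θ)^t`. -/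
theorem ndoppe_sum_pmf (r : ℕ) (hr : 1 ≤ r) (a : ℕ → ℝ) (ha : ∀ k, 0 ≤ a k)
    (hne : ∃ k, k < r ∧ a k ≠ 0) (θ : ℝ) (hθ : θ ∈ Set.Ioo (0 : ℝ) 1)
    (n : ℕ) (hn : 1 ≤ n) (t : ℕ) :
    ∑ x ∈ Finset.Nat.antidiagonalTuple n t,
        ∏ i, h r a θ * p r a (x i) * (1 - θ) ^ (x i) =
      h r a θ ^ n * A r a n t * (1 - θ) ^ t :=
  ndoppe_sum_pmf_general r a θ n t
end

section
/- (Unbiasedness of the CDF estimator F̂) For every integer n ≥ 2, every x ∈ ℕ and every θ ∈ (0,1), ∑_{t=0}^∞ (∑_{w=0}^{min(x,t)} p(w)·A_{n−1}(t−w)/A_n(t)) · h(θ)^n·A_n(t)·(1−θ)^t = ∑_{w=0}^x h(θ)·p(w)·(1−θ)^w = F(x); that is, the estimator F̂(x) = ∑_{w=0}^{min(x,T)} p(w)·A_{n−1}(T−w)/A_n(T) is an unbiased estimator of the CDF F(x) when T has the PMF f_T(t) = h(θ)^n·A_n(t)·(1−θ)^t. -/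
open scoped BigOperators

/-!
With `z = 1 - θ`, the generating function of `A m` is `∑ₜ A m t zᵗ = h(θ)⁻ᵐ`: expand
`h(θ)⁻¹ = ∑ₖ aₖ k! θ^{-(k+1)}` to the `m`-th power by the multinomial theorem and each resulting
`θ^{-s} = (1 - z)^{-s}` by the negative binomial series. Cancelling `A n t`,
`F̂(t) f_T(t) = ∑_{w ≤ min(x,t)} hⁿ p(w) z^w · A (n-1) (t-w) z^{t-w}`, and summing the inner
factor over `t ≥ w` gives `hⁿ p(w) z^w h^{-(n-1)} = h p(w) z^w`.
-/

open Finset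
open scoped Nat

lemma hasSum_choose_add_sub_one_mul_pow {𝕜 : Type*} [NormedDivisionRing 𝕜] {z : 𝕜}
    (hz : ‖z‖ < 1) (s : ℕ) :
    HasSum (fun t : ℕ => ((t + s - 1).choose t : 𝕜) * z ^ t) (1 / (1 - z) ^ s) := by
  rcases s with _ | s
  · -- truncated subtraction: `(t - 1).choose t = 0` for `t ≥ 1`, so only `t = 0` contributes
    convert hasSum_single (f := fun t : ℕ => ((t + 0 - 1).choose t : 𝕜) * z ^ t) 0
      fun t ht => ?_ using 1
    · simp
    · simp [Nat.choose_eq_zero_of_lt (by omega : t - 1 < t)]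
  · simpa [Nat.choose_symm_add] using hasSum_choose_mul_geometric_of_norm_lt_one s hz

lemma Nat.cast_multinomial_eq_div {α K : Type*} [Field K] [CharZero K] (s : Finset α)
    (f : α → ℕ) :
    (Nat.multinomial s f : K) = (∑ i ∈ s, f i)! / ∏ i ∈ s, ((f i)! : K) := by
  rw [eq_div_iff (prod_ne_zero_iff.mpr fun i _ => mod_cast Nat.factorial_ne_zero _),
    ← Nat.multinomial_spec s f]
  push_cast
  ring

lemma HasSum.ite_le_sub {α : Type*} [AddCommMonoid α] [TopologicalSpace α] {f : ℕ → α}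
    {s : α} (hf : HasSum f s) (w : ℕ) :
    HasSum (fun t => if w ≤ t then f (t - w) else 0) s := by
  refine ((add_left_injective w).hasSum_iff fun t ht => ?_).mp ?_
  · rw [if_neg]
    rintro hwt
    exact ht ⟨t - w, Nat.sub_add_cancel hwt⟩
  · simpa [Function.comp_def] using hf

lemma sum_range_min_div_mul_eq_sum_ite {K : Type*} [Field K] (x t : ℕ) (P Q : ℕ → K) {R : K}
    (hR : R ≠ 0) (c z : K) :
    (∑ w ∈ range (min x t + 1), P w * Q (t - w) / R) * (c * R * z ^ t) =
      ∑ w ∈ range (x + 1), c * P w * z ^ w * (if w ≤ t then Q (t - w) * z ^ (t - w) else 0) := by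
  have hrange : range (min x t + 1) = (range (x + 1)).filter (· ≤ t) := by
    ext w
    simp only [mem_range, mem_filter]
    omega
  rw [hrange, sum_filter, sum_mul]
  refine sum_congr rfl fun w _ => ?_
  split_ifs with hwt
  · rw [← Nat.sub_add_cancel hwt, pow_add, Nat.add_sub_cancel]
    field_simp
  · simp

lemma inv_h_pow_eq_sum_antidiagonalTuple (r : ℕ) (a : ℕ → ℝ) (m : ℕ) (θ : ℝ) :
    (h r a θ)⁻¹ ^ m = ∑ y ∈ Nat.antidiagonalTuple r m,
      ((m ! : ℝ) / ∏ k : Fin r, ((y k)! : ℝ)) * (∏ k : Fin r, (a k * (k ! : ℝ)) ^ y k) *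
        (1 / θ ^ ∑ k : Fin r, ((k : ℕ) + 1) * y k) := by
  rw [h, one_div, inv_inv, sum_range (fun k => a k * (k ! : ℝ) / θ ^ (k + 1)),
    sum_pow_eq_sum_piAntidiag, piAntidiag_univ_fin_eq_antidiagonalTuple]
  refine sum_congr rfl fun y hy => ?_
  rw [Nat.cast_multinomial_eq_div, Nat.mem_antidiagonalTuple.mp hy, mul_assoc]
  congr 1
  simp only [div_eq_mul_inv, one_mul, mul_pow, prod_mul_distrib, ← inv_pow, ← pow_mul,
    prod_pow_eq_pow_sum]

lemma hasSum_A_mul_pow (r : ℕ) (a : ℕ → ℝ) (m : ℕ) {θ : ℝ} (hθ : |1 - θ| < 1) :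
    HasSum (fun t => A r a m t * (1 - θ) ^ t) ((h r a θ)⁻¹ ^ m) := by
  rw [inv_h_pow_eq_sum_antidiagonalTuple]
  simp only [A, sum_mul]
  refine hasSum_sum fun y _ => ?_
  have := (hasSum_choose_add_sub_one_mul_pow hθ (∑ k : Fin r, ((k : ℕ) + 1) * y k)).mul_left
    ((m ! : ℝ) / (∏ k : Fin r, ((y k)! : ℝ)) * ∏ k : Fin r, (a k * (k ! : ℝ)) ^ y k)
  rw [sub_sub_cancel] at this
  exact this.congr_fun fun t => by ring

lemma A_pos (r : ℕ) (hr : 1 ≤ r) (a : ℕ → ℝ) (ha : ∀ k, 0 ≤ a k) (ha0 : 0 < a 0) {m : ℕ}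
    (hm : m ≠ 0) (t : ℕ) : 0 < A r a m t := by
  obtain ⟨r, rfl⟩ : ∃ r', r = r' + 1 := ⟨r - 1, by omega⟩
  refine sum_pos' (fun y _ => ?_) ⟨Pi.single 0 m, ?_, ?_⟩
  · exact mul_nonneg (mul_nonneg (by positivity)
      (prod_nonneg fun k _ => pow_nonneg (mul_nonneg (ha k) (by positivity)) _)) (by positivity)
  · simp [Nat.mem_antidiagonalTuple]
  · simp only [Fin.prod_univ_succ, Fin.sum_univ_succ, Pi.single_eq_same, ne_eq, Fin.succ_ne_zero,
      not_false_eq_true, Pi.single_eq_of_ne, Nat.factorial_zero, Nat.cast_one, prod_const_one,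
      mul_one, Fin.coe_ofNat_eq_mod, Nat.zero_mod, Fin.val_succ, pow_zero, zero_add, one_mul,
      mul_zero, sum_const_zero, add_zero]
    exact mul_pos (mul_pos (by positivity) (pow_pos ha0 m)) (mod_cast Nat.choose_pos (by omega))

lemma h_pos (r : ℕ) (hr : 1 ≤ r) (a : ℕ → ℝ) (ha : ∀ k, 0 ≤ a k) (ha0 : 0 < a 0) {θ : ℝ}
    (hθ : 0 < θ) : 0 < h r a θ := by
  refine one_div_pos.mpr (sum_pos' (fun k _ => by have := ha k; positivity)
    ⟨0, mem_range.mpr hr, ?_⟩)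
  simpa using div_pos ha0 hθ

/-- Unbiasedness of the CDF estimator `F̂`: For every integer `n ≥ 2`,
every `x ∈ ℕ` and every `θ ∈ (0,1)`,
`∑_{t=0}^∞ (∑_{w=0}^{min(x,t)} p(w) A_{n−1}(t−w)/A_n(t)) · h(θ)^n A_n(t) (1−θ)^t
   = ∑_{w=0}^x h(θ) p(w) (1−θ)^w = F(x)`;
i.e. `F̂(x) = ∑_{w=0}^{min(x,T)} p(w) A_{n−1}(T−w)/A_n(T)` is an unbiased estimator of the
CDF `F(x)` when `T` has PMF `f_T(t) = h(θ)^n A_n(t) (1−θ)^t`. -/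
theorem cdf_estimator_unbiased (r : ℕ) (hr : 1 ≤ r) (a : ℕ → ℝ) (ha : ∀ k, 0 ≤ a k)
    (ha0 : 0 < a 0) (n : ℕ) (hn : 2 ≤ n) (x : ℕ) (θ : ℝ) (hθ : θ ∈ Set.Ioo (0 : ℝ) 1) :
    HasSum
      (fun t : ℕ =>
        (∑ w ∈ Finset.range (min x t + 1), p r a w * A r a (n - 1) (t - w) / A r a n t) *
          (h r a θ ^ n * A r a n t * (1 - θ) ^ t))
      (∑ w ∈ Finset.range (x + 1), h r a θ * p r a w * (1 - θ) ^ w) := by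
  have hθ' : |1 - θ| < 1 := abs_sub_lt_iff.mpr ⟨by linarith [hθ.1], by linarith [hθ.2]⟩
  have hh : h r a θ ^ n * (h r a θ)⁻¹ ^ (n - 1) = h r a θ := by
    rw [inv_pow, ← pow_sub₀ _ (h_pos r hr a ha ha0 hθ.1).ne' (by omega),
      Nat.sub_sub_self (by omega), pow_one]
  have hterm : ∀ w, HasSum
      (fun t => h r a θ ^ n * p r a w * (1 - θ) ^ w *
        (if w ≤ t then A r a (n - 1) (t - w) * (1 - θ) ^ (t - w) else 0))
      (h r a θ * p r a w * (1 - θ) ^ w) := fun w => by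
    have hval : h r a θ ^ n * p r a w * (1 - θ) ^ w * (h r a θ)⁻¹ ^ (n - 1) =
        h r a θ * p r a w * (1 - θ) ^ w := by
      linear_combination p r a w * (1 - θ) ^ w * hh
    rw [← hval]
    exact ((hasSum_A_mul_pow r a (n - 1) hθ').ite_le_sub w).mul_left _
  refine (hasSum_sum fun w _ => hterm w).congr_fun fun t => ?_
  exact sum_range_min_div_mul_eq_sum_ite x t _ _ (A_pos r hr a ha ha0 (by omega) t).ne' _ _
end

section
/- (Theorem 3.1, NDL special case) For every integer n ≥ 1, every θ ∈ (0,1) and every t ∈ ℕ, the n-fold convolution of the NDL PMF satisfies ∑_{(x_1,…,x_n) ∈ ℕ^n, x_1+⋯+x_n = t} ∏_{i=1}^n (θ²/(1+θ))·(2+x_i)·(1−θ)^{x_i} = (θ²/(1+θ))^n · (∑_{k=0}^n C(n,k)·C(2n−k+t−1, t)) · (1−θ)^t. -/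
/-!
The generating function of `x ↦ 2 + x` is `F = (2 - X) / (1 - X)² = (1 + (1 - X)) / (1 - X)²`.
After pulling `(θ²/(1+θ))ⁿ (1-θ)ᵗ` out of every product, the left side is the `t`-th coefficient
of `Fⁿ = ∑ₖ C(n,k) (1 - X)^(-(2n-k))`, and the `t`-th coefficient of `(1 - X)^(-m)` is
`C(m + t - 1, t)`.
-/

open PowerSeries Finset

namespace PowerSeries

variable {R : Type*}

theorem coeff_pow_eq_sum_antidiagonalTuple [CommSemiring R] (φ : R⟦X⟧) (n t : ℕ) :
    coeff t (φ ^ n) = ∑ x ∈ Nat.antidiagonalTuple n t, ∏ i, coeff (x i) φ := by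
  rw [← Fin.prod_const, coeff_prod]
  refine sum_nbij' (⇑) Finsupp.equivFunOnFinite.symm ?_ ?_ ?_ ?_ ?_
  · intro l hl
    simp only [mem_finsuppAntidiag] at hl
    simp [Nat.mem_antidiagonalTuple, ← hl.1]
  · intro x hx
    simp only [Nat.mem_antidiagonalTuple] at hx
    simp [mem_finsuppAntidiag, ← hx]
  · intro l _; exact Finsupp.equivFunOnFinite.symm_apply_apply l
  · intro x _; rfl
  · intro l _; rfl

variable [CommRing R]

theorem invOneSubPow_pow (d n : ℕ) : invOneSubPow R d ^ n = invOneSubPow R (d * n) := by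
  simp_rw [invOneSubPow_eq_inv_one_sub_pow, pow_mul]

-- For `d = 0` the truncated subtraction gives `C(t - 1, t)`, which is `1` at `t = 0` and `0` after.
theorem coeff_invOneSubPow (d t : ℕ) :
    coeff t (invOneSubPow R d : R⟦X⟧) = (d + t - 1).choose t := by
  cases d with
  | zero =>
    cases t <;> simp [invOneSubPow_zero, coeff_one]
  | succ d =>
    rw [invOneSubPow_val_succ_eq_mk_add_choose, coeff_mk, Nat.choose_symm_add]
    congr 2
    omega

theorem mk_two_add_eq :
    (mk fun x : ℕ => (2 + x : R)) = (1 + (1 - X)) * (invOneSubPow R 2 : R⟦X⟧) := by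
  ext (_ | m)
  · simp [invOneSubPow_val_succ_eq_mk_add_choose, coeff_mk]; norm_num
  · simp only [invOneSubPow_val_succ_eq_mk_add_choose, coeff_mk, add_mul, sub_mul, one_mul,
      map_add, map_sub, coeff_succ_X_mul, Nat.choose_one_right]
    push_cast
    ring

theorem sum_antidiagonalTuple_prod_two_add (n t : ℕ) :
    ∑ x ∈ Nat.antidiagonalTuple n t, ∏ i, (2 + (x i : R)) =
      ∑ k ∈ range (n + 1), (n.choose k : R) * ((2 * n - k + t - 1).choose t : R) := by
  calc ∑ x ∈ Nat.antidiagonalTuple n t, ∏ i, (2 + (x i : R))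
      = coeff t ((mk fun x : ℕ => (2 + x : R)) ^ n) := by
        simp only [coeff_pow_eq_sum_antidiagonalTuple, coeff_mk]
    _ = ∑ k ∈ range (n + 1), (n.choose k : R) * coeff t (invOneSubPow R (2 * n - k) : R⟦X⟧) := by
        rw [mk_two_add_eq, mul_pow, add_comm 1, add_pow, ← Units.val_pow_eq_pow_val,
          invOneSubPow_pow, sum_mul, map_sum]
        refine sum_congr rfl fun k hk => ?_
        have hk : 2 * n = 2 * n - k + k := by rw [mem_range] at hk; omega
        conv_lhs => rw [hk]
        rw [one_pow, mul_one, mul_comm _ (n.choose k : R⟦X⟧), mul_assoc,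
          one_sub_pow_mul_invOneSubPow_val_add_eq_invOneSubPow_val, ← map_natCast (C (R := R)),
          coeff_C_mul]
    _ = ∑ k ∈ range (n + 1), (n.choose k : R) * ((2 * n - k + t - 1).choose t : R) := by
        simp only [coeff_invOneSubPow]

end PowerSeries

theorem ndl_sum_pmf_general (n : ℕ) (θ : ℝ) (t : ℕ) :
    ∑ x ∈ Finset.Nat.antidiagonalTuple n t,
        ∏ i, θ ^ 2 / (1 + θ) * (2 + (x i : ℝ)) * (1 - θ) ^ (x i) =
      (θ ^ 2 / (1 + θ)) ^ n *
        (∑ k ∈ Finset.range (n + 1),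
          (Nat.choose n k : ℝ) * (Nat.choose (2 * n - k + t - 1) t : ℝ)) *
        (1 - θ) ^ t := by
  have hfactor : ∀ x ∈ Nat.antidiagonalTuple n t,
      ∏ i, θ ^ 2 / (1 + θ) * (2 + (x i : ℝ)) * (1 - θ) ^ (x i) =
        (θ ^ 2 / (1 + θ)) ^ n * (1 - θ) ^ t * ∏ i, (2 + (x i : ℝ)) := by
    intro x hx
    rw [Nat.mem_antidiagonalTuple] at hx
    rw [prod_mul_distrib, prod_mul_distrib, Fin.prod_const, prod_pow_eq_pow_sum, hx]
    ring
  rw [sum_congr rfl hfactor, ← mul_sum, sum_antidiagonalTuple_prod_two_add]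
  ring

/-- Theorem 3.1, NDL special case: For every integer `n ≥ 1`, every
`θ ∈ (0,1)` and every `t ∈ ℕ`, the `n`-fold convolution of the NDL PMF satisfies
`∑_{x₁+⋯+x_n=t} ∏_{i=1}^n (θ²/(1+θ))(2+x_i)(1−θ)^{x_i}
   = (θ²/(1+θ))^n (∑_{k=0}^n C(n,k) C(2n−k+t−1, t)) (1−θ)^t`. -/
theorem ndl_sum_pmf (n : ℕ) (hn : 1 ≤ n) (θ : ℝ) (hθ : θ ∈ Set.Ioo (0 : ℝ) 1) (t : ℕ) :
    ∑ x ∈ Finset.Nat.antidiagonalTuple n t,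
        ∏ i, θ ^ 2 / (1 + θ) * (2 + (x i : ℝ)) * (1 - θ) ^ (x i) =
      (θ ^ 2 / (1 + θ)) ^ n *
        (∑ k ∈ Finset.range (n + 1),
          (Nat.choose n k : ℝ) * (Nat.choose (2 * n - k + t - 1) t : ℝ)) *
        (1 - θ) ^ t :=
  ndl_sum_pmf_general n θ t
end
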